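/- arXiv:2509.21823 — 6 statements merged into one kernel-verified Lean document; each statement's English description precedes it below -/
import Mathlib

section
/- Let p_a ∈ (0,1] and N ≥ 1 be a fixed natural number. For p_c ∈ ℝ define q(p_c) = p_a·p_c + (1−p_a)·(1−p_c) and P_final(p_c) = (p_a·p_c/q(p_c))·(1 − (1−q(p_c))^N) + p_a·(1−q(p_c))^N. Then P_final is monotone nondecreasing in p_c on the interval (1/2, 1]; that is, for all p_c, p_c' with 1/2 < p_c ≤ p_c' ≤ 1, P_final(p_c) ≤ P_final(p_c'). -/
/-- P_final is monotone nondecreasing in the reward accuracy on (1/2, 1]. -/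
theorem stmt_1 (p_a : ℝ) (hpa : p_a ∈ Set.Ioc (0 : ℝ) 1) (N : ℕ) (hN : 1 ≤ N) :
    ∀ p_c p_c' : ℝ, 1 / 2 < p_c → p_c ≤ p_c' → p_c' ≤ 1 →
      (p_a * p_c / (p_a * p_c + (1 - p_a) * (1 - p_c))) *
          (1 - (1 - (p_a * p_c + (1 - p_a) * (1 - p_c))) ^ N) +
        p_a * (1 - (p_a * p_c + (1 - p_a) * (1 - p_c))) ^ N ≤
      (p_a * p_c' / (p_a * p_c' + (1 - p_a) * (1 - p_c'))) *
          (1 - (1 - (p_a * p_c' + (1 - p_a) * (1 - p_c'))) ^ N) +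
        p_a * (1 - (p_a * p_c' + (1 - p_a) * (1 - p_c'))) ^ N := by
  obtain ⟨ha0, ha1⟩ := hpa
  intro x y hx hxy hy1
  have hx1 : x ≤ 1 := le_trans hxy hy1
  have hy : 1/2 < y := lt_of_lt_of_le hx hxy
  set q1 : ℝ := p_a * x + (1 - p_a) * (1 - x) with hq1
  set q2 : ℝ := p_a * y + (1 - p_a) * (1 - y) with hq2
  have hq1pos : 0 < q1 := by rw [hq1]; nlinarith
  have hq2pos : 0 < q2 := by rw [hq2]; nlinarith
  have hr1n : 0 ≤ 1 - q1 := by rw [hq1]; nlinarith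
  have hr2n : 0 ≤ 1 - q2 := by rw [hq2]; nlinarith
  have hr1lt : 1 - q1 < 1 := by linarith
  have hr2lt : 1 - q2 < 1 := by linarith
  rcases le_or_gt (1/2 : ℝ) p_a with hha | hha
  · have hrw1 : p_a * x / q1 * (1 - (1 - q1) ^ N) + p_a * (1 - q1) ^ N
        = p_a + (p_a * x / q1 - p_a) * (1 - (1 - q1) ^ N) := by ring
    have hrw2 : p_a * y / q2 * (1 - (1 - q2) ^ N) + p_a * (1 - q2) ^ N
        = p_a + (p_a * y / q2 - p_a) * (1 - (1 - q2) ^ N) := by ring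
    rw [hrw1, hrw2]
    have h1 : p_a ≤ p_a * x / q1 := by
      rw [le_div_iff₀ hq1pos, hq1]
      nlinarith [mul_nonneg (mul_nonneg ha0.le (by linarith : (0:ℝ) ≤ 1 - p_a)) (by linarith : (0:ℝ) ≤ 2*x - 1)]
    have h2 : p_a * x / q1 ≤ p_a * y / q2 := by
      rw [div_le_div_iff₀ hq1pos hq2pos, hq1, hq2]
      nlinarith [mul_nonneg (mul_nonneg ha0.le (by linarith : (0:ℝ) ≤ 1 - p_a)) (by linarith : (0:ℝ) ≤ y - x)]
    have hr21 : 1 - q2 ≤ 1 - q1 := by rw [hq1, hq2]; nlinarith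
    have hpow : (1 - q2) ^ N ≤ (1 - q1) ^ N := pow_le_pow_left₀ hr2n hr21 N
    have hpow1 : (1 - q1) ^ N ≤ 1 := pow_le_one₀ hr1n hr1lt.le
    have hmul : (p_a * x / q1 - p_a) * (1 - (1 - q1) ^ N)
        ≤ (p_a * y / q2 - p_a) * (1 - (1 - q2) ^ N) :=
      mul_le_mul (by linarith) (by linarith) (by linarith) (by linarith)
    linarith
  · have key1 : 1 - (1 - q1) ^ N = q1 * ∑ k ∈ Finset.range N, (1 - q1) ^ k := by
      linear_combination geom_sum_mul (1 - q1) N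
    have key2 : 1 - (1 - q2) ^ N = q2 * ∑ k ∈ Finset.range N, (1 - q2) ^ k := by
      linear_combination geom_sum_mul (1 - q2) N
    have e1 : p_a * x / q1 * (1 - (1 - q1) ^ N)
        = p_a * (x * ∑ k ∈ Finset.range N, (1 - q1) ^ k) := by
      rw [key1]; field_simp
    have e2 : p_a * y / q2 * (1 - (1 - q2) ^ N)
        = p_a * (y * ∑ k ∈ Finset.range N, (1 - q2) ^ k) := by
      rw [key2]; field_simp
    rw [e1, e2]
    have hr12 : 1 - q1 ≤ 1 - q2 := by rw [hq1, hq2]; nlinarith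
    have hsum : x * ∑ k ∈ Finset.range N, (1 - q1) ^ k
        ≤ y * ∑ k ∈ Finset.range N, (1 - q2) ^ k := by
      rw [Finset.mul_sum, Finset.mul_sum]
      refine Finset.sum_le_sum fun k _ => ?_
      exact mul_le_mul hxy (pow_le_pow_left₀ hr1n hr12 k)
        (pow_nonneg hr1n k) (by linarith)
    have hpow : (1 - q1) ^ N ≤ (1 - q2) ^ N := pow_le_pow_left₀ hr1n hr12 N
    have h := mul_le_mul_of_nonneg_left (add_le_add hsum hpow) ha0.le
    rw [mul_add, mul_add] at h
    linarith
end

section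
/- Let p_a ∈ (0,1) and N ≥ 1 be a fixed natural number. For p_c ∈ ℝ define q(p_c) = p_a·p_c + (1−p_a)·(1−p_c) and P_final(p_c) = (p_a·p_c/q(p_c))·(1 − (1−q(p_c))^N) + p_a·(1−q(p_c))^N. Then P_final is strictly increasing in p_c on the interval (1/2, 1]; that is, for all p_c, p_c' with 1/2 < p_c < p_c' ≤ 1, P_final(p_c) < P_final(p_c'). -/
/-!
Write `q = a c + (1 - a)(1 - c)` and `r = 1 - q`. Because `1 + (2a - 1)(2c - 1) = 2q`, the
derivative of `P_final` in `c` collapses to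
`a (1 - a) / q² · (1 - r^N + N (1 - r)(1 - 2r) r^(N-1))`.
From `1 - r^N = (1 - r)(1 + r + ⋯ + r^(N-1)) ≥ N (1 - r) r^(N-1)` the bracket is at least
`2N (1 - r)² r^(N-1)`, which is positive as soon as `0 < r < 1`, i.e. for every `c ∈ [0, 1]`
when `0 < a < 1`.
-/

open Set

noncomputable section

namespace TestTimeScaling

def acceptProb (a c : ℝ) : ℝ := a * c + (1 - a) * (1 - c)

def finalSuccessRate (a : ℝ) (N : ℕ) (c : ℝ) : ℝ :=
  a * c / acceptProb a c * (1 - (1 - acceptProb a c) ^ N) + a * (1 - acceptProb a c) ^ N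

lemma nat_mul_one_sub_mul_pow_le_one_sub_pow {r : ℝ} (h0 : 0 ≤ r) (h1 : r ≤ 1) (n : ℕ) :
    n * (1 - r) * r ^ (n - 1) ≤ 1 - r ^ n := by
  have hsum : n * r ^ (n - 1) ≤ ∑ i ∈ Finset.range n, r ^ i := by
    simpa using Finset.card_nsmul_le_sum (Finset.range n) (r ^ ·) (r ^ (n - 1)) fun i hi =>
      pow_le_pow_of_le_one h0 h1 (Nat.le_sub_one_of_lt (Finset.mem_range.1 hi))
  rw [← mul_neg_geom_sum, mul_comm (n : ℝ), mul_assoc]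
  exact mul_le_mul_of_nonneg_left hsum (sub_nonneg.2 h1)

lemma one_sub_pow_add_mul_one_sub_two_mul_pos {r : ℝ} (h0 : 0 < r) (h1 : r < 1) {N : ℕ}
    (hN : 1 ≤ N) : 0 < 1 - r ^ N + N * (1 - r) * (1 - 2 * r) * r ^ (N - 1) := by
  have hgeom := nat_mul_one_sub_mul_pow_le_one_sub_pow h0.le h1.le N
  have hNpos : (0 : ℝ) < N := by exact_mod_cast hN
  have hpos : 0 < 2 * N * (1 - r) ^ 2 * r ^ (N - 1) := by
    have : 0 < 1 - r := sub_pos.2 h1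
    positivity
  calc 0 < 2 * N * (1 - r) ^ 2 * r ^ (N - 1) := hpos
    _ = N * (1 - r) * r ^ (N - 1) + N * (1 - r) * (1 - 2 * r) * r ^ (N - 1) := by ring
    _ ≤ 1 - r ^ N + N * (1 - r) * (1 - 2 * r) * r ^ (N - 1) := by linarith

variable {a c : ℝ}

lemma acceptProb_mem_Ioo (ha : a ∈ Ioo 0 1) (hc : c ∈ Icc 0 1) : acceptProb a c ∈ Ioo 0 1 := by
  have h1a : 1 - a ∈ Ioo (0 : ℝ) 1 := ⟨sub_pos.2 ha.2, sub_lt_self 1 ha.1⟩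
  have hmem := convex_Ioo (0 : ℝ) 1 ha h1a hc.1 (sub_nonneg.2 hc.2) (add_sub_cancel c 1)
  simpa only [acceptProb, smul_eq_mul, mul_comm c, mul_comm (1 - c)] using hmem

lemma hasDerivAt_acceptProb (a c : ℝ) : HasDerivAt (acceptProb a) (2 * a - 1) c := by
  have haffine : acceptProb a = fun x => (2 * a - 1) * x + (1 - a) := by
    funext x
    unfold acceptProb
    ring
  rw [haffine]
  simpa using ((hasDerivAt_id c).const_mul (2 * a - 1)).add_const (1 - a)

lemma hasDerivAt_finalSuccessRate (N : ℕ) (hq : acceptProb a c ≠ 0) :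
    HasDerivAt (finalSuccessRate a N)
      (a * (1 - a) / acceptProb a c ^ 2 *
        (1 - (1 - acceptProb a c) ^ N + N * acceptProb a c * (2 * acceptProb a c - 1) *
          (1 - acceptProb a c) ^ (N - 1))) c := by
  have hq' := hasDerivAt_acceptProb a c
  have hr := ((hasDerivAt_const c (1 : ℝ)).sub hq').pow N
  have hs := ((hasDerivAt_id c).const_mul a).div hq' hq
  refine ((hs.mul ((hasDerivAt_const c 1).sub hr)).add (hr.const_mul a)).congr_deriv ?_
  simp only [Pi.sub_apply, Pi.div_apply, Pi.pow_apply, id]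
  field_simp
  unfold acceptProb
  ring

theorem finalSuccessRate_strictMonoOn (ha : a ∈ Ioo 0 1) {N : ℕ} (hN : 1 ≤ N) :
    StrictMonoOn (finalSuccessRate a N) (Icc 0 1) := by
  have hderiv (c : ℝ) (hc : c ∈ Icc 0 1) :=
    hasDerivAt_finalSuccessRate N (acceptProb_mem_Ioo ha hc).1.ne'
  refine strictMonoOn_of_hasDerivWithinAt_pos (convex_Icc 0 1)
    (fun c hc => (hderiv c hc).continuousAt.continuousWithinAt)
    (fun c hc => (hderiv c (interior_subset hc)).hasDerivWithinAt) fun c hc => ?_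
  obtain ⟨hq0, hq1⟩ := acceptProb_mem_Ioo ha (interior_subset hc)
  have hfactor : 0 < a * (1 - a) / acceptProb a c ^ 2 :=
    div_pos (mul_pos ha.1 (sub_pos.2 ha.2)) (pow_pos hq0 2)
  have hbracket := one_sub_pow_add_mul_one_sub_two_mul_pos (r := 1 - acceptProb a c)
    (by linarith) (by linarith) hN
  refine mul_pos hfactor (hbracket.trans_eq ?_)
  ring

end TestTimeScaling

end

/-- P_final is strictly increasing in the reward accuracy on (1/2, 1]. -/
theorem stmt_2 (p_a : ℝ) (hpa : p_a ∈ Set.Ioo (0 : ℝ) 1) (N : ℕ) (hN : 1 ≤ N) :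
    ∀ p_c p_c' : ℝ, 1 / 2 < p_c → p_c < p_c' → p_c' ≤ 1 →
      (p_a * p_c / (p_a * p_c + (1 - p_a) * (1 - p_c))) *
          (1 - (1 - (p_a * p_c + (1 - p_a) * (1 - p_c))) ^ N) +
        p_a * (1 - (p_a * p_c + (1 - p_a) * (1 - p_c))) ^ N <
      (p_a * p_c' / (p_a * p_c' + (1 - p_a) * (1 - p_c'))) *
          (1 - (1 - (p_a * p_c' + (1 - p_a) * (1 - p_c'))) ^ N) +
        p_a * (1 - (p_a * p_c' + (1 - p_a) * (1 - p_c'))) ^ N := by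
  intro p_c p_c' hc hcc' hc'
  exact TestTimeScaling.finalSuccessRate_strictMonoOn hpa hN
    ⟨by linarith, by linarith⟩ ⟨by linarith, hc'⟩ hcc'
end

section
/- Let p_a ∈ (0,1], p_c ∈ [1/2, 1], set q = p_a·p_c + (1−p_a)·(1−p_c), and let N ∈ ℕ. Then the final success rate P_final = (p_a·p_c/q)·(1 − (1−q)^N) + p_a·(1−q)^N satisfies P_final ≥ p_a; i.e., test-time scaling with a reward of accuracy at least 1/2 never degrades the policy agent's success rate. -/
/-- With reward accuracy at least 1/2, test-time scaling never degrades the success rate. -/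
theorem stmt_3 (p_a p_c q : ℝ)
    (hpa : p_a ∈ Set.Ioc (0 : ℝ) 1) (hpc : p_c ∈ Set.Icc (1 / 2 : ℝ) 1)
    (hq : q = p_a * p_c + (1 - p_a) * (1 - p_c)) (N : ℕ) :
    p_a ≤ (p_a * p_c / q) * (1 - (1 - q) ^ N) + p_a * (1 - q) ^ N := by
  obtain ⟨ha0, ha1⟩ := hpa
  obtain ⟨hc0, hc1⟩ := hpc
  have hqpos : 0 < q := by nlinarith
  have hq1 : q ≤ 1 := by nlinarith
  have hx0 : 0 ≤ (1 - q) ^ N := pow_nonneg (by linarith) N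
  have hx1 : (1 - q) ^ N ≤ 1 := pow_le_one₀ (by linarith) (by linarith)
  have hkey : p_a ≤ p_a * p_c / q := by
    rw [le_div_iff₀ hqpos]
    nlinarith [mul_nonneg (mul_nonneg ha0.le (by linarith : (0:ℝ) ≤ 1 - p_a)) (by linarith : (0:ℝ) ≤ 2*p_c - 1)]
  nlinarith [mul_le_mul_of_nonneg_right hkey (by linarith : (0:ℝ) ≤ 1 - (1-q)^N)]
end

section
/- Let p_a ∈ (0,1], p_c ∈ [1/2, 1], and set q = p_a·p_c + (1−p_a)·(1−p_c). Then for every N ∈ ℕ, the final success rate P_final(N) = (p_a·p_c/q)·(1 − (1−q)^N) + p_a·(1−q)^N satisfies P_final(N) ≤ p_a·p_c/q; i.e., the quantity p_a·p_c/q is an upper capability boundary for the policy agent under test-time scaling. -/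
/-- The quantity p_a·p_c/q is an upper capability boundary under test-time scaling. -/
theorem stmt_5 (p_a p_c q : ℝ)
    (hpa : p_a ∈ Set.Ioc (0 : ℝ) 1) (hpc : p_c ∈ Set.Icc (1 / 2 : ℝ) 1)
    (hq : q = p_a * p_c + (1 - p_a) * (1 - p_c)) :
    ∀ N : ℕ,
      (p_a * p_c / q) * (1 - (1 - q) ^ N) + p_a * (1 - q) ^ N ≤ p_a * p_c / q := by
  intro N
  obtain ⟨hpa0, hpa1⟩ := hpa
  obtain ⟨hpc0, hpc1⟩ := hpc
  have hq0 : 0 < q := by nlinarith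
  have hq1 : q ≤ 1 := by nlinarith
  have hpow : (0:ℝ) ≤ (1 - q) ^ N := pow_nonneg (by linarith) N
  have hkey : p_a ≤ p_a * p_c / q := by
    rw [le_div_iff₀ hq0]
    nlinarith [mul_nonneg (mul_nonneg hpa0.le (by linarith : (0:ℝ) ≤ 1 - p_a)) (by linarith : (0:ℝ) ≤ 2*p_c - 1)]
  nlinarith [mul_nonneg hpow (sub_nonneg.2 hkey)]
end

section
/- Let p_a ∈ (0,1], p_c ∈ [1/2, 1], and set q = p_a·p_c + (1−p_a)·(1−p_c). Then the map N ↦ P_final(N) = (p_a·p_c/q)·(1 − (1−q)^N) + p_a·(1−q)^N is monotone nondecreasing in the trial budget N ∈ ℕ; i.e., for all N ≤ N', P_final(N) ≤ P_final(N'). -/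
/-- With reward accuracy ≥ 1/2, P_final is monotone nondecreasing in the trial budget. -/
theorem stmt_6 (p_a p_c q : ℝ)
    (hpa : p_a ∈ Set.Ioc (0 : ℝ) 1) (hpc : p_c ∈ Set.Icc (1 / 2 : ℝ) 1)
    (hq : q = p_a * p_c + (1 - p_a) * (1 - p_c)) :
    Monotone (fun N : ℕ =>
      (p_a * p_c / q) * (1 - (1 - q) ^ N) + p_a * (1 - q) ^ N) := by
  obtain ⟨ha0, ha1⟩ := hpa
  obtain ⟨hc0, hc1⟩ := hpc
  have hq0 : 0 < q := by nlinarith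
  have h1q : 0 ≤ 1 - q := by nlinarith
  have hA : p_a ≤ p_a * p_c / q := by
    rw [le_div_iff₀ hq0]
    nlinarith [mul_nonneg (mul_nonneg ha0.le (by linarith : (0:ℝ) ≤ 1 - p_a)) (by linarith : (0:ℝ) ≤ 2*p_c - 1)]
  apply monotone_nat_of_le_succ
  intro n
  have hpow : 0 ≤ (1 - q) ^ n := pow_nonneg h1q n
  rw [pow_succ]
  nlinarith [mul_nonneg (mul_nonneg (sub_nonneg.2 hA) hq0.le) hpow]
end

section
/- Let p_a ∈ (0,1], p_c ∈ [0, 1/2], and assume q = p_a·p_c + (1−p_a)·(1−p_c) is nonzero. Then the map N ↦ P_final(N) = (p_a·p_c/q)·(1 − (1−q)^N) + p_a·(1−q)^N is monotone nonincreasing in the trial budget N ∈ ℕ; i.e., for all N ≤ N', P_final(N') ≤ P_final(N). -/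
/-- With reward accuracy ≤ 1/2, P_final is monotone nonincreasing in the trial budget. -/
theorem stmt_7 (p_a p_c q : ℝ)
    (hpa : p_a ∈ Set.Ioc (0 : ℝ) 1) (hpc : p_c ∈ Set.Icc (0 : ℝ) (1 / 2))
    (hq : q = p_a * p_c + (1 - p_a) * (1 - p_c)) (hq0 : q ≠ 0) :
    Antitone (fun N : ℕ =>
      (p_a * p_c / q) * (1 - (1 - q) ^ N) + p_a * (1 - q) ^ N) := by
  obtain ⟨hpa0, hpa1⟩ := hpa
  obtain ⟨hpc0, hpc1⟩ := hpc
  have hqpos : 0 < q := by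
    rcases lt_or_eq_of_le (show (0:ℝ) ≤ q by nlinarith) with h | h
    · exact h
    · exact absurd h.symm hq0
  have hA : p_a * p_c / q ≤ p_a := by
    rw [div_le_iff₀ hqpos]
    nlinarith [mul_nonneg (sub_nonneg.2 hpa1) (show 0 ≤ 1 - 2*p_c by linarith), mul_nonneg hpa0.le hpc0]
  have hr0 : 0 ≤ 1 - q := by nlinarith
  have hr1 : 1 - q ≤ 1 := by linarith
  apply antitone_nat_of_succ_le
  intro n
  have hrn : 0 ≤ (1 - q) ^ n := pow_nonneg hr0 n
  rw [pow_succ]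
  nlinarith [mul_nonneg (mul_nonneg (sub_nonneg.2 hA) hrn) (sub_nonneg.2 hr1)]
end
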